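/- For the control â and cost J(t,â) := ∫_t^1 c(s)·â(s)·(∫_s^1 â(r) dr) ds, one has J(t, â) < 0 for every t ∈ [0,1). Since J(t, 0) = 0 for all t, the control â strictly Pareto dominates the zero control: J(t, â) < J(t, 0) for all t < 1 and J(1, â) = J(1, 0) = 0. -/

import Mathlib

open MeasureTheory Set

noncomputable def tn (n : ℕ) : ℝ := 1 - 1 / 2 ^ n
noncomputable def sn (n : ℕ) : ℝ := (tn n + 3 * tn (n + 1)) / 4
noncomputable def c (x : ℝ) : ℝ :=
  ∑' n : ℕ, ((Ico (tn n) (sn n)).indicator (fun _ => (1 : ℝ)) x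
    + 6 * (Ico (sn n) (tn (n + 1))).indicator (fun _ => (1 : ℝ)) x)
noncomputable def ahat (x : ℝ) : ℝ :=
  ∑' n : ℕ, ((Ico (tn n) (sn n)).indicator (fun _ => (1 : ℝ)) x
    - (Ico (sn n) (tn (n + 1))).indicator (fun _ => (1 : ℝ)) x)
noncomputable def J (t : ℝ) (α : ℝ → ℝ) : ℝ :=
  ∫ s in t..1, c s * α s * ∫ r in s..1, α r

/-! On the block `[tₙ, tₙ₊₁)` of length `εₙ / 2`, `εₙ = 2⁻ⁿ`, the control `â` is `1` on the first
three quarters and `-1` on the last quarter, and `c` is constant on both pieces. There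
`A(s) = ∫ₛ¹ â` is affine, so `J(·, â)` is an explicit quadratic on each piece. Telescoping over the
blocks, with `A(tₙ) → 0` and `J(tₙ, â) → 0` by continuity, gives `A(tₙ) = εₙ / 2` and
`J(tₙ, â) = -εₙ² / 32`; on each piece `J(·, â)` stays below its (negative) value at one endpoint of
the block. -/

open Filter Topology Function

section General

theorem tsum_eq_of_mem_of_pairwise_disjoint {ι X M : Type*} [AddCommMonoid M] [TopologicalSpace M]
    {s : ι → Set X} (hs : Pairwise (Disjoint on s)) {x : X} {f : ι → M}
    (hf : ∀ j, x ∉ s j → f j = 0) {i : ι} (hx : x ∈ s i) :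
    ∑' j, f j = f i :=
  tsum_eq_single i fun _ hj => hf _ (disjoint_left.1 (hs hj.symm) hx)

theorem exists_tsum_eq_of_pairwise_disjoint {ι X M : Type*} [Nonempty ι] [AddCommMonoid M]
    [TopologicalSpace M] {s : ι → Set X} (hs : Pairwise (Disjoint on s)) {x : X} {f : ι → M}
    (hf : ∀ j, x ∉ s j → f j = 0) :
    ∃ i, ∑' j, f j = f i := by
  by_cases hx : ∃ i, x ∈ s i
  · obtain ⟨i, hi⟩ := hx
    exact ⟨i, tsum_eq_of_mem_of_pairwise_disjoint hs hf hi⟩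
  · inhabit ι
    exact ⟨default, by simp [hf _ fun h => hx ⟨_, h⟩]⟩

theorem eq_of_sub_succ_eq_of_tendsto {E : Type*} [AddCommGroup E] [TopologicalSpace E]
    [IsTopologicalAddGroup E] [T2Space E] {u v : ℕ → E} {l : E}
    (h : ∀ n, u n - u (n + 1) = v n - v (n + 1))
    (hu : Tendsto u atTop (𝓝 l)) (hv : Tendsto v atTop (𝓝 l)) (n : ℕ) : u n = v n := by
  have hconst : ∀ n, u n - v n = u 0 - v 0 := by
    intro n
    induction n with
    | zero => rfl
    | succ n ih => rw [← ih, ← sub_eq_sub_iff_sub_eq_sub.1 (h n)]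
  have h0 : u 0 - v 0 = 0 :=
    tendsto_nhds_unique (tendsto_const_nhds.congr fun n => (hconst n).symm)
      (by simpa using hu.sub hv)
  rw [← sub_eq_zero, hconst n, h0]

theorem integral_affine_sub (a b γ κ B : ℝ) :
    ∫ s in a..b, γ * κ * (κ * (b - s) + B) = γ * κ * ((b - a) * B + κ * (b - a) ^ 2 / 2) := by
  rw [intervalIntegral.integral_const_mul, intervalIntegral.integral_add
    (by apply Continuous.intervalIntegrable; fun_prop) intervalIntegrable_const,
    intervalIntegral.integral_const_mul, intervalIntegral.integral_comp_sub_left (fun x => x),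
    integral_id, intervalIntegral.integral_const, smul_eq_mul]
  ring

end General

section Grid

theorem one_div_two_pow_succ (n : ℕ) : (1 : ℝ) / 2 ^ (n + 1) = 1 / 2 * (1 / 2 ^ n) := by
  rw [pow_succ]; ring

theorem sn_eq (n : ℕ) : sn n = tn n + 3 / 8 * (1 / 2 ^ n) := by
  rw [sn, tn, tn]; ring

theorem tn_succ (n : ℕ) : tn (n + 1) = tn n + 1 / 2 * (1 / 2 ^ n) := by
  rw [tn, tn]; ring

theorem tn_lt_sn (n : ℕ) : tn n < sn n := by
  rw [sn_eq]
  linarith [show (0 : ℝ) < 1 / 2 ^ n by positivity]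

theorem sn_lt_tn_succ (n : ℕ) : sn n < tn (n + 1) := by
  rw [sn_eq, tn_succ]
  linarith [show (0 : ℝ) < 1 / 2 ^ n by positivity]

theorem strictMono_tn : StrictMono tn :=
  strictMono_nat_of_lt_succ fun n => (tn_lt_sn n).trans (sn_lt_tn_succ n)

theorem tendsto_one_div_two_pow : Tendsto (fun n : ℕ => 1 / (2 : ℝ) ^ n) atTop (𝓝 0) := by
  simpa [div_pow] using tendsto_pow_atTop_nhds_zero_of_lt_one (r := (1 / 2 : ℝ)) (by norm_num)
    (by norm_num)

theorem tendsto_tn : Tendsto tn atTop (𝓝 1) := by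
  unfold tn
  simpa using (tendsto_const_nhds (x := (1 : ℝ))).sub tendsto_one_div_two_pow

theorem exists_mem_Ico_tn {t : ℝ} (h0 : 0 ≤ t) (h1 : t < 1) :
    ∃ n, t ∈ Ico (tn n) (tn (n + 1)) := by
  have hpos : 0 < 1 - t := by linarith
  obtain ⟨n, hle, hlt⟩ := exists_nat_pow_near (x := 1 / (1 - t)) (y := 2)
    (by rw [le_div_iff₀ hpos]; linarith) (by norm_num)
  refine ⟨n, ?_, ?_⟩
  · rw [tn, sub_le_comm, le_div_iff₀ (by positivity)]
    rwa [le_div_iff₀ hpos, mul_comm] at hle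
  · rw [tn, lt_sub_comm, div_lt_iff₀ (by positivity)]
    rwa [div_lt_iff₀ hpos, mul_comm] at hlt

theorem pairwise_disjoint_Ico_tn : Pairwise (Disjoint on fun n => Ico (tn n) (tn (n + 1))) := by
  simpa only [Order.succ_eq_add_one] using strictMono_tn.monotone.pairwise_disjoint_on_Ico_succ

end Grid

section Pieces

theorem indicator_pieces_eq_zero {x : ℝ} (n : ℕ) (hx : x ∉ Ico (tn n) (tn (n + 1))) :
    (Ico (tn n) (sn n)).indicator (fun _ => (1 : ℝ)) x = 0 ∧
      (Ico (sn n) (tn (n + 1))).indicator (fun _ => (1 : ℝ)) x = 0 :=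
  ⟨indicator_of_notMem (fun h => hx ⟨h.1, h.2.trans (sn_lt_tn_succ n)⟩) _,
    indicator_of_notMem (fun h => hx ⟨(tn_lt_sn n).le.trans h.1, h.2⟩) _⟩

variable {n : ℕ} {x : ℝ}

theorem ahat_eq_term (hx : x ∈ Ico (tn n) (tn (n + 1))) :
    ahat x = (Ico (tn n) (sn n)).indicator (fun _ => (1 : ℝ)) x
      - (Ico (sn n) (tn (n + 1))).indicator (fun _ => (1 : ℝ)) x := by
  unfold ahat
  refine tsum_eq_of_mem_of_pairwise_disjoint pairwise_disjoint_Ico_tn (fun m hm => ?_) hx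
  simp [indicator_pieces_eq_zero m hm]

theorem c_eq_term (hx : x ∈ Ico (tn n) (tn (n + 1))) :
    c x = (Ico (tn n) (sn n)).indicator (fun _ => (1 : ℝ)) x
      + 6 * (Ico (sn n) (tn (n + 1))).indicator (fun _ => (1 : ℝ)) x := by
  unfold c
  refine tsum_eq_of_mem_of_pairwise_disjoint pairwise_disjoint_Ico_tn (fun m hm => ?_) hx
  simp [indicator_pieces_eq_zero m hm]

theorem ahat_eq_one (hx : x ∈ Ico (tn n) (sn n)) : ahat x = 1 := by
  rw [ahat_eq_term ⟨hx.1, hx.2.trans (sn_lt_tn_succ n)⟩, indicator_of_mem hx,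
    indicator_of_notMem fun h => h.1.not_gt hx.2, sub_zero]

theorem ahat_eq_neg_one (hx : x ∈ Ico (sn n) (tn (n + 1))) : ahat x = -1 := by
  rw [ahat_eq_term ⟨(tn_lt_sn n).le.trans hx.1, hx.2⟩, indicator_of_mem hx,
    indicator_of_notMem fun h => h.2.not_ge hx.1, zero_sub]

theorem c_eq_one (hx : x ∈ Ico (tn n) (sn n)) : c x = 1 := by
  rw [c_eq_term ⟨hx.1, hx.2.trans (sn_lt_tn_succ n)⟩, indicator_of_mem hx,
    indicator_of_notMem fun h => h.1.not_gt hx.2, mul_zero, add_zero]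

theorem c_eq_six (hx : x ∈ Ico (sn n) (tn (n + 1))) : c x = 6 := by
  rw [c_eq_term ⟨(tn_lt_sn n).le.trans hx.1, hx.2⟩, indicator_of_mem hx,
    indicator_of_notMem fun h => h.2.not_ge hx.1, zero_add, mul_one]

theorem abs_ahat_le (x : ℝ) : |ahat x| ≤ 1 := by
  obtain ⟨n, hn⟩ := exists_tsum_eq_of_pairwise_disjoint pairwise_disjoint_Ico_tn
    (x := x) (f := fun m => (Ico (tn m) (sn m)).indicator (fun _ => (1 : ℝ)) x
      - (Ico (sn m) (tn (m + 1))).indicator (fun _ => (1 : ℝ)) x)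
    (fun m hm => by simp [indicator_pieces_eq_zero m hm])
  rw [ahat, hn]
  simp only [indicator_apply]
  split_ifs <;> norm_num

theorem abs_c_le (x : ℝ) : |c x| ≤ 7 := by
  obtain ⟨n, hn⟩ := exists_tsum_eq_of_pairwise_disjoint pairwise_disjoint_Ico_tn
    (x := x) (f := fun m => (Ico (tn m) (sn m)).indicator (fun _ => (1 : ℝ)) x
      + 6 * (Ico (sn m) (tn (m + 1))).indicator (fun _ => (1 : ℝ)) x)
    (fun m hm => by simp [indicator_pieces_eq_zero m hm])
  rw [c, hn]
  simp only [indicator_apply]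
  split_ifs <;> norm_num

theorem measurable_ahat : Measurable ahat :=
  Measurable.tsum fun _ =>
    (measurable_const.indicator measurableSet_Ico).sub (measurable_const.indicator measurableSet_Ico)

theorem measurable_c : Measurable c :=
  Measurable.tsum fun _ => (measurable_const.indicator measurableSet_Ico).add
    ((measurable_const.indicator measurableSet_Ico).const_mul 6)

end Pieces

section Cost

variable {α : ℝ → ℝ}

theorem intervalIntegrable_c_mul {u v : ℝ} (hα : IntervalIntegrable α volume u v) :
    IntervalIntegrable (fun s => c s * α s) volume u v :=
  ⟨hα.1.bdd_mul measurable_c.aestronglyMeasurable (ae_of_all _ abs_c_le),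
    hα.2.bdd_mul measurable_c.aestronglyMeasurable (ae_of_all _ abs_c_le)⟩

theorem continuous_integral_to_one (hα : ∀ u v, IntervalIntegrable α volume u v) :
    Continuous fun s => ∫ r in s..1, α r :=
  (intervalIntegral.continuous_primitive hα 1).neg.congr fun s =>
    (intervalIntegral.integral_symm 1 s).symm

theorem intervalIntegrable_J_integrand (hα : ∀ u v, IntervalIntegrable α volume u v) (u v : ℝ) :
    IntervalIntegrable (fun s => c s * α s * ∫ r in s..1, α r) volume u v :=
  (intervalIntegrable_c_mul (hα u v)).mul_continuousOn
    (continuous_integral_to_one hα).continuousOn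

theorem J_add (hα : ∀ u v, IntervalIntegrable α volume u v) (a b : ℝ) :
    J a α = (∫ s in a..b, c s * α s * ∫ r in s..1, α r) + J b α :=
  (intervalIntegral.integral_add_adjacent_intervals
    (intervalIntegrable_J_integrand hα a b) (intervalIntegrable_J_integrand hα b 1)).symm

theorem continuous_J (hα : ∀ u v, IntervalIntegrable α volume u v) :
    Continuous fun t => J t α :=
  (intervalIntegral.continuous_primitive (intervalIntegrable_J_integrand hα) 1).neg.congr
    fun t => (intervalIntegral.integral_symm 1 t).symm

theorem J_one (α : ℝ → ℝ) : J 1 α = 0 :=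
  intervalIntegral.integral_same

theorem J_zero (t : ℝ) : J t (fun _ => 0) = 0 := by
  simp [J]

theorem integral_to_one_eq_of_eqOn_Ico (hα : ∀ u v, IntervalIntegrable α volume u v)
    {a b κ : ℝ} (hab : a ≤ b) (hκ : ∀ x ∈ Ico a b, α x = κ) :
    ∫ r in a..1, α r = κ * (b - a) + ∫ r in b..1, α r := by
  rw [← intervalIntegral.integral_add_adjacent_intervals (hα a b) (hα b 1),
    intervalIntegral.integral_congr_Ioo_of_le hab fun x hx => hκ x (Ioo_subset_Ico_self hx),
    intervalIntegral.integral_const, smul_eq_mul, mul_comm]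

theorem J_eq_of_eqOn_Ico (hα : ∀ u v, IntervalIntegrable α volume u v)
    {a b γ κ : ℝ} (hab : a ≤ b) (hκ : ∀ x ∈ Ico a b, α x = κ) (hγ : ∀ x ∈ Ico a b, c x = γ) :
    J a α = γ * κ * ((b - a) * (∫ r in b..1, α r) + κ * (b - a) ^ 2 / 2) + J b α := by
  rw [J_add hα a b, ← integral_affine_sub]
  congr 1
  refine intervalIntegral.integral_congr_Ioo_of_le hab fun s hs => ?_
  have hs' : s ∈ Ico a b := Ioo_subset_Ico_self hs
  rw [hγ s hs', hκ s hs', integral_to_one_eq_of_eqOn_Ico hα hs.2.le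
    fun x hx => hκ x ⟨hs.1.le.trans hx.1, hx.2⟩]

end Cost

section Ahat

theorem intervalIntegrable_ahat (u v : ℝ) : IntervalIntegrable ahat volume u v :=
  (intervalIntegrable_const (c := (1 : ℝ))).mono_fun measurable_ahat.aestronglyMeasurable
    (ae_of_all _ fun x => by simpa using abs_ahat_le x)

theorem integral_ahat_tn (n : ℕ) : ∫ r in tn n..1, ahat r = 1 / 2 * (1 / 2 ^ n) := by
  refine eq_of_sub_succ_eq_of_tendsto (u := fun m => ∫ r in tn m..1, ahat r)
    (v := fun m => 1 / 2 * (1 / 2 ^ m)) (l := 0) (fun m => ?_) ?_ ?_ n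
  · rw [integral_to_one_eq_of_eqOn_Ico intervalIntegrable_ahat (tn_lt_sn m).le
        fun x hx => ahat_eq_one hx,
      integral_to_one_eq_of_eqOn_Ico intervalIntegrable_ahat (sn_lt_tn_succ m).le
        fun x hx => ahat_eq_neg_one hx, sn_eq, tn_succ]
    ring
  · simpa [comp_def] using
      ((continuous_integral_to_one intervalIntegrable_ahat).tendsto 1).comp tendsto_tn
  · simpa only [mul_zero] using tendsto_one_div_two_pow.const_mul (1 / 2)

theorem integral_ahat_sn (n : ℕ) : ∫ r in sn n..1, ahat r = 1 / 8 * (1 / 2 ^ n) := by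
  rw [integral_to_one_eq_of_eqOn_Ico intervalIntegrable_ahat (sn_lt_tn_succ n).le
    fun x hx => ahat_eq_neg_one hx, integral_ahat_tn, sn_eq, tn_succ]
  ring

theorem J_ahat_tn (n : ℕ) : J (tn n) ahat = -(1 / 2 ^ n) ^ 2 / 32 := by
  refine eq_of_sub_succ_eq_of_tendsto (u := fun m => J (tn m) ahat)
    (v := fun m => -(1 / 2 ^ m) ^ 2 / 32) (l := 0) (fun m => ?_) ?_ ?_ n
  · rw [J_eq_of_eqOn_Ico intervalIntegrable_ahat (tn_lt_sn m).le (fun x hx => ahat_eq_one hx)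
        fun x hx => c_eq_one hx,
      J_eq_of_eqOn_Ico intervalIntegrable_ahat (sn_lt_tn_succ m).le
        (fun x hx => ahat_eq_neg_one hx) fun x hx => c_eq_six hx,
      integral_ahat_sn, integral_ahat_tn, sn_eq, tn_succ]
    ring
  · simpa [comp_def, J_one] using
      ((continuous_J intervalIntegrable_ahat).tendsto 1).comp tendsto_tn
  · simpa using ((tendsto_one_div_two_pow.pow 2).neg.div_const 32)

theorem J_ahat_sn (n : ℕ) : J (sn n) ahat = -19 / 128 * (1 / 2 ^ n) ^ 2 := by
  rw [J_eq_of_eqOn_Ico intervalIntegrable_ahat (sn_lt_tn_succ n).le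
      (fun x hx => ahat_eq_neg_one hx) fun x hx => c_eq_six hx,
    integral_ahat_tn, J_ahat_tn, sn_eq, tn_succ]
  ring

theorem J_ahat_neg_of_mem_Ico {n : ℕ} {t : ℝ} (ht : t ∈ Ico (tn n) (tn (n + 1))) :
    J t ahat < 0 := by
  have hL : (0 : ℝ) < 1 / 2 ^ n := by positivity
  rcases lt_or_ge t (sn n) with hts | hst
  · rw [J_eq_of_eqOn_Ico intervalIntegrable_ahat hts.le
        (fun x hx => ahat_eq_one ⟨ht.1.trans hx.1, hx.2⟩)
        (fun x hx => c_eq_one ⟨ht.1.trans hx.1, hx.2⟩),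
      integral_ahat_sn, J_ahat_sn]
    have hd : sn n - t ≤ 3 / 8 * (1 / 2 ^ n) := by rw [sn_eq]; linarith [ht.1]
    have hd0 : 0 ≤ sn n - t := by linarith
    nlinarith [mul_le_mul hd hd hd0 (by positivity)]
  · rw [J_eq_of_eqOn_Ico intervalIntegrable_ahat ht.2.le
        (fun x hx => ahat_eq_neg_one ⟨hst.trans hx.1, hx.2⟩)
        (fun x hx => c_eq_six ⟨hst.trans hx.1, hx.2⟩),
      integral_ahat_tn, J_ahat_tn]
    have hd : tn (n + 1) - t ≤ 1 / 8 * (1 / 2 ^ n) := by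
      rw [tn_succ]; rw [sn_eq] at hst; linarith
    have hd0 : 0 ≤ tn (n + 1) - t := by linarith [ht.2]
    rw [one_div_two_pow_succ]
    nlinarith [mul_nonneg hd0 (by linarith : 0 ≤ 1 / 2 * (1 / 2 ^ n) - (tn (n + 1) - t))]

end Ahat

theorem stmt8 :
    (∀ t ∈ Ico (0 : ℝ) 1, J t ahat < 0 ∧ J t ahat < J t (fun _ => 0)) ∧
    J 1 ahat = J 1 (fun _ => 0) := by
  refine ⟨fun t ht => ?_, by rw [J_one, J_zero]⟩
  obtain ⟨n, hn⟩ := exists_mem_Ico_tn ht.1 ht.2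
  have hneg := J_ahat_neg_of_mem_Ico hn
  exact ⟨hneg, by rwa [J_zero]⟩
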